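/- arXiv:2011.09098 — 7 statements merged into one kernel-verified Lean document; each statement's English description precedes it below -/
import Mathlib

section
/- For all n, m, g ∈ ℕ, the cross-antenna cross-correlation of the LOS signal satisfies D_n[m,g] · conj(D_0[m,g]) = |α_0|² · exp(i n Ω_0). In particular, this quantity is independent of the packet index m, the subcarrier index g, the timing offset δ_τ(m), the carrier frequency offset δ_f(m), and the transmitted symbols x[m,g]. -/
/-! `D_n[m,g]` is `α_0 · exp(i n Ω_0) · u` with `u` independent of `n` and of modulus one (a product
of unimodular phases and a unimodular symbol), so `D_n · conj D_0 = |α_0|² · exp(i n Ω_0) · |u|²`. -/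

open Complex

lemma Complex.norm_exp_eq_one_of_re_eq_zero {z : ℂ} (hz : z.re = 0) : ‖exp z‖ = 1 := by
  rw [norm_exp, hz, Real.exp_zero]

lemma Complex.mul_mul_conj_mul (a c u : ℂ) :
    a * c * u * starRingEnd ℂ (a * u) = (‖a‖ : ℂ) ^ 2 * c * (‖u‖ : ℂ) ^ 2 := by
  rw [← mul_conj', ← mul_conj']
  simp only [map_mul]
  ring

theorem cacc_los_term_general
    (α : ℕ → ℂ) (T_A T : ℝ)
    (τ Ω : ℕ → ℝ) (δτ δf : ℕ → ℝ) (x : ℕ → ℕ → ℂ)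
    (hx : ∀ m g : ℕ, ‖x m g‖ = 1)
    (D : ℕ → ℕ → ℕ → ℂ)
    (hD : ∀ n m g : ℕ, D n m g =
      α 0 * Complex.exp (Complex.I * n * Ω 0) *
      Complex.exp (Complex.I * (2 * Real.pi * m * T_A * δf m)) *
      Complex.exp (-Complex.I * (2 * Real.pi * g / T) * (τ 0 + δτ m)) * x m g) :
    ∀ n m g : ℕ, D n m g * (starRingEnd ℂ) (D 0 m g) =
      ((‖α 0‖ : ℂ)) ^ 2 * Complex.exp (Complex.I * n * Ω 0) := by
  intro n m g
  set u := exp (I * (2 * Real.pi * m * T_A * δf m)) *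
    exp (-I * (2 * Real.pi * g / T) * (τ 0 + δτ m)) * x m g
  have hu : ‖u‖ = 1 := by
    rw [norm_mul, norm_mul, hx, norm_exp_eq_one_of_re_eq_zero, norm_exp_eq_one_of_re_eq_zero]
    · norm_num
    · simp [← ofReal_natCast, ← ofReal_ofNat, ← ofReal_mul, ← ofReal_div, ← ofReal_add]
    · simp [← ofReal_natCast, ← ofReal_ofNat, ← ofReal_mul]
  have hD_phase : ∀ n, D n m g = α 0 * exp (I * n * Ω 0) * u := fun n => by
    rw [hD]; ring
  rw [hD_phase, hD_phase 0]
  simp only [Nat.cast_zero, mul_zero, zero_mul, exp_zero, mul_one]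
  rw [mul_mul_conj_mul, hu]
  push_cast
  ring

/-- The cross-antenna cross-correlation of the LOS signal satisfies
`D_n[m,g] · conj(D_0[m,g]) = |α_0|² · exp(i n Ω_0)`, independent of `m`, `g`, the
timing offsets, the carrier frequency offsets, and the transmitted symbols. -/
theorem cacc_los_term
    (L : ℕ) (α : ℕ → ℂ) (T_A T : ℝ) (hT_A : 0 < T_A) (hT : 0 < T)
    (f τ Ω : ℕ → ℝ) (δτ δf : ℕ → ℝ) (x : ℕ → ℕ → ℂ)
    (hx : ∀ m g : ℕ, ‖x m g‖ = 1)
    (D I : ℕ → ℕ → ℕ → ℂ)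
    (hD : ∀ n m g : ℕ, D n m g =
      α 0 * Complex.exp (Complex.I * n * Ω 0) *
      Complex.exp (Complex.I * (2 * Real.pi * m * T_A * δf m)) *
      Complex.exp (-Complex.I * (2 * Real.pi * g / T) * (τ 0 + δτ m)) * x m g)
    (hI : ∀ n m g : ℕ, I n m g =
      ∑ l ∈ Finset.Icc 1 L, α l * Complex.exp (Complex.I * n * Ω l) *
        Complex.exp (Complex.I * (2 * Real.pi * m * T_A * (f l + δf m))) *
        Complex.exp (-Complex.I * (2 * Real.pi * g / T) * (τ l + δτ m)) * x m g) :
    ∀ n m g : ℕ, D n m g * (starRingEnd ℂ) (D 0 m g) =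
      ((‖α 0‖ : ℂ)) ^ 2 * Complex.exp (Complex.I * n * Ω 0) :=
  cacc_los_term_general α T_A T τ Ω δτ δf x hx D hD
end

section
/- For all n, m, g ∈ ℕ, the cross terms of the cross-antenna cross-correlation satisfy D_n[m,g] · conj(I_0[m,g]) + I_n[m,g] · conj(D_0[m,g]) = Σ_{l=1}^{L} α_0 · conj(α_l) · exp(−i 2π m T_A f_l) · exp(−i (2π g / T)(τ_0 − τ_l)) · exp(i n Ω_0) + Σ_{l=1}^{L} α_l · conj(α_0) · exp(i 2π m T_A f_l) · exp(−i (2π g / T)(τ_l − τ_0)) · exp(i n Ω_l). In particular, this expression is free of the timing offset δ_τ(m), the carrier frequency offset δ_f(m), and the symbols x[m,g], and contains only the actual Doppler frequencies f_l and relative delays τ_l − τ_0, each appearing together with its mirrored (sign-flipped) version. -/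
/-!
Each path contributes `αₗ · e^{i(phase)} · e^{i·offset phase} · x[m,g]` to the received signal.
In a product of one path with the conjugate of another, the offset phases `δ_f(m)` and `δ_τ(m)`
are common to both factors and cancel, and `x · conj x = |x|² = 1` removes the symbol, leaving
only the differences of the path phases.
-/

open Complex ComplexConjugate

lemma mul_exp_mul_conj_mul_exp {a b x u v : ℂ} (hx : ‖x‖ = 1) :
    a * exp u * x * conj (b * exp v * x) = a * conj b * exp (u + conj v) := by
  have hxx : x * conj x = 1 := by rw [mul_conj', hx]; norm_num
  calc a * exp u * x * conj (b * exp v * x)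
      = a * conj b * (exp u * exp (conj v)) * (x * conj x) := by
        simp only [map_mul, ← exp_conj]; ring
    _ = a * conj b * exp (u + conj v) := by rw [hxx, ← exp_add, mul_one]

lemma mul_exp_three_mul_conj_mul_exp_three {a b x u₁ u₂ u₃ v₁ v₂ v₃ w₁ w₂ w₃ : ℂ}
    (hx : ‖x‖ = 1) (hw : u₁ + u₂ + u₃ + conj (v₁ + v₂ + v₃) = w₁ + w₂ + w₃) :
    a * exp u₁ * exp u₂ * exp u₃ * x * conj (b * exp v₁ * exp v₂ * exp v₃ * x) =
      a * conj b * exp w₁ * exp w₂ * exp w₃ := by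
  have merge : ∀ c z₁ z₂ z₃ : ℂ, c * exp z₁ * exp z₂ * exp z₃ = c * exp (z₁ + z₂ + z₃) := by
    intro c z₁ z₂ z₃
    rw [exp_add, exp_add, mul_assoc, mul_assoc, mul_assoc]
  rw [merge a, merge b, merge, mul_exp_mul_conj_mul_exp hx, hw]

theorem cacc_cross_terms_general
    (L : ℕ) (α : ℕ → ℂ) (T_A T : ℝ)
    (f τ Ω : ℕ → ℝ) (δτ δf : ℕ → ℝ) (x : ℕ → ℕ → ℂ)
    (hx : ∀ m g : ℕ, ‖x m g‖ = 1)
    (D I : ℕ → ℕ → ℕ → ℂ)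
    (hD : ∀ n m g : ℕ, D n m g =
      α 0 * Complex.exp (Complex.I * n * Ω 0) *
      Complex.exp (Complex.I * (2 * Real.pi * m * T_A * δf m)) *
      Complex.exp (-Complex.I * (2 * Real.pi * g / T) * (τ 0 + δτ m)) * x m g)
    (hI : ∀ n m g : ℕ, I n m g =
      ∑ l ∈ Finset.Icc 1 L, α l * Complex.exp (Complex.I * n * Ω l) *
        Complex.exp (Complex.I * (2 * Real.pi * m * T_A * (f l + δf m))) *
        Complex.exp (-Complex.I * (2 * Real.pi * g / T) * (τ l + δτ m)) * x m g) :
    ∀ n m g : ℕ,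
      D n m g * (starRingEnd ℂ) (I 0 m g) + I n m g * (starRingEnd ℂ) (D 0 m g) =
      (∑ l ∈ Finset.Icc 1 L, α 0 * (starRingEnd ℂ) (α l) *
        Complex.exp (-Complex.I * (2 * Real.pi * m * T_A * f l)) *
        Complex.exp (-Complex.I * (2 * Real.pi * g / T) * (τ 0 - τ l)) *
        Complex.exp (Complex.I * n * Ω 0)) +
      (∑ l ∈ Finset.Icc 1 L, α l * (starRingEnd ℂ) (α 0) *
        Complex.exp (Complex.I * (2 * Real.pi * m * T_A * f l)) *
        Complex.exp (-Complex.I * (2 * Real.pi * g / T) * (τ l - τ 0)) *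
        Complex.exp (Complex.I * n * Ω l)) := by
  intro n m g
  rw [hD, hI, hI, hD, map_sum, Finset.mul_sum, Finset.sum_mul, ← Finset.sum_add_distrib,
    ← Finset.sum_add_distrib]
  refine Finset.sum_congr rfl fun l _ => ?_
  congr 1 <;> refine mul_exp_three_mul_conj_mul_exp_three (hx m g) ?_ <;>
    simp only [map_add, map_mul, map_neg, map_div₀, conj_I, conj_ofReal, map_natCast,
      map_ofNat] <;>
    push_cast <;> ring

/-- The cross terms of the cross-antenna cross-correlation are free of
the timing/frequency offsets and symbols, and contain the actual Doppler frequencies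
and relative delays together with their mirrored (sign-flipped) versions. -/
theorem cacc_cross_terms
    (L : ℕ) (α : ℕ → ℂ) (T_A T : ℝ) (hT_A : 0 < T_A) (hT : 0 < T)
    (f τ Ω : ℕ → ℝ) (δτ δf : ℕ → ℝ) (x : ℕ → ℕ → ℂ)
    (hx : ∀ m g : ℕ, ‖x m g‖ = 1)
    (D I : ℕ → ℕ → ℕ → ℂ)
    (hD : ∀ n m g : ℕ, D n m g =
      α 0 * Complex.exp (Complex.I * n * Ω 0) *
      Complex.exp (Complex.I * (2 * Real.pi * m * T_A * δf m)) *
      Complex.exp (-Complex.I * (2 * Real.pi * g / T) * (τ 0 + δτ m)) * x m g)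
    (hI : ∀ n m g : ℕ, I n m g =
      ∑ l ∈ Finset.Icc 1 L, α l * Complex.exp (Complex.I * n * Ω l) *
        Complex.exp (Complex.I * (2 * Real.pi * m * T_A * (f l + δf m))) *
        Complex.exp (-Complex.I * (2 * Real.pi * g / T) * (τ l + δτ m)) * x m g) :
    ∀ n m g : ℕ,
      D n m g * (starRingEnd ℂ) (I 0 m g) + I n m g * (starRingEnd ℂ) (D 0 m g) =
      (∑ l ∈ Finset.Icc 1 L, α 0 * (starRingEnd ℂ) (α l) *
        Complex.exp (-Complex.I * (2 * Real.pi * m * T_A * f l)) *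
        Complex.exp (-Complex.I * (2 * Real.pi * g / T) * (τ 0 - τ l)) *
        Complex.exp (Complex.I * n * Ω 0)) +
      (∑ l ∈ Finset.Icc 1 L, α l * (starRingEnd ℂ) (α 0) *
        Complex.exp (Complex.I * (2 * Real.pi * m * T_A * f l)) *
        Complex.exp (-Complex.I * (2 * Real.pi * g / T) * (τ l - τ 0)) *
        Complex.exp (Complex.I * n * Ω l)) :=
  cacc_cross_terms_general L α T_A T f τ Ω δτ δf x hx D I hD hI
end

section
/- For all n, m, g ∈ ℕ, the NLOS auto-correlation term decomposes as I_n[m,g] · conj(I_0[m,g]) = Σ_{l=1}^{L} |α_l|² · exp(i n Ω_l) + Σ_{l=1}^{L} Σ_{x=1, x≠l}^{L} α_l · conj(α_x) · exp(i n Ω_l) · exp(i 2π m T_A (f_l − f_x)) · exp(−i (2π g / T)(τ_l − τ_x)), where the first sum is independent of m and g (a constant component) and the second sum depends on m and g only through the differences f_l − f_x and τ_l − τ_x; in particular the whole expression is free of the offsets δ_τ(m) and δ_f(m). -/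
/-!
Each path term of `I n m g` factors as an offset-free path gain times one common factor
`exp(i 2π m T_A δ_f(m)) · exp(-i (2π g / T) δ_τ(m)) · x[m,g]` of modulus one, so this factor
cancels against its conjugate in `I_n · conj I_0`. Expanding the product of the two sums and
splitting off the diagonal `x = l`, where the path gain times its conjugate is `|α_l|² exp(i n Ω_l)`,
gives the constant and the variant component.
-/

open Complex Finset ComplexConjugate

theorem Finset.sum_mul_sum_eq_sum_mul_add_sum_sum_erase {ι R : Type*}
    [NonUnitalNonAssocSemiring R] [DecidableEq ι] (s : Finset ι) (a b : ι → R) :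
    (∑ i ∈ s, a i) * ∑ j ∈ s, b j = ∑ i ∈ s, a i * b i + ∑ i ∈ s, ∑ j ∈ s.erase i, a i * b j := by
  rw [sum_mul_sum, ← sum_add_distrib]
  exact sum_congr rfl fun i hi => (add_sum_erase s _ hi).symm

theorem Complex.mul_mul_conj_mul_of_norm_eq_one {a b u : ℂ} (hu : ‖u‖ = 1) :
    a * u * conj (b * u) = a * conj b := by
  have hu' : u * conj u = 1 := by
    rw [mul_conj, normSq_eq_norm_sq, hu]; norm_num
  calc a * u * conj (b * u) = a * conj b * (u * conj u) := by rw [map_mul]; ring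
    _ = a * conj b := by rw [hu', mul_one]

section Channel

variable (α : ℕ → ℂ) (T_A T : ℝ) (f τ Ω : ℕ → ℝ)

noncomputable def nlosPathGain (n m g l : ℕ) : ℂ :=
  α l * exp (I * n * Ω l) * exp (I * (2 * Real.pi * m * T_A * f l)) *
    exp (-I * (2 * Real.pi * g / T) * τ l)

noncomputable def offsetFactor (δτ δf : ℕ → ℝ) (x : ℕ → ℕ → ℂ) (m g : ℕ) : ℂ :=
  exp (I * (2 * Real.pi * m * T_A * δf m)) * exp (-I * (2 * Real.pi * g / T) * δτ m) * x m g

theorem norm_offsetFactor {δτ δf : ℕ → ℝ} {x : ℕ → ℕ → ℂ} {m g : ℕ} (hx : ‖x m g‖ = 1) :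
    ‖offsetFactor T_A T δτ δf x m g‖ = 1 := by
  simp [offsetFactor, norm_exp, hx]

theorem nlos_path_term_eq (δτ δf : ℕ → ℝ) (x : ℕ → ℕ → ℂ) (n m g l : ℕ) :
    α l * exp (I * n * Ω l) * exp (I * (2 * Real.pi * m * T_A * (f l + δf m))) *
        exp (-I * (2 * Real.pi * g / T) * (τ l + δτ m)) * x m g =
      nlosPathGain α T_A T f τ Ω n m g l * offsetFactor T_A T δτ δf x m g := by
  simp only [nlosPathGain, offsetFactor, mul_add, exp_add]
  ring

theorem nlosPathGain_mul_conj (n m g l k : ℕ) :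
    nlosPathGain α T_A T f τ Ω n m g l * conj (nlosPathGain α T_A T f τ Ω 0 m g k) =
      α l * conj (α k) * exp (I * n * Ω l) *
        exp (I * (2 * Real.pi * m * T_A * (f l - f k))) *
        exp (-I * (2 * Real.pi * g / T) * (τ l - τ k)) := by
  simp only [nlosPathGain, map_mul, ← exp_conj, map_neg, map_div₀, conj_I, conj_ofReal,
    map_ofNat, map_natCast, neg_neg, Nat.cast_zero, mul_zero, zero_mul, exp_zero,
    mul_one]
  calc _ = α l * conj (α k) * exp (I * n * Ω l) *
        (exp (I * (2 * Real.pi * m * T_A * f l)) * exp (-I * (2 * Real.pi * m * T_A * f k))) *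
        (exp (-I * (2 * Real.pi * g / T) * τ l) * exp (I * (2 * Real.pi * g / T) * τ k)) := by ring
    _ = _ := by rw [← exp_add, ← exp_add]; congr 3 <;> ring

theorem nlosPathGain_mul_conj_self (n m g l : ℕ) :
    nlosPathGain α T_A T f τ Ω n m g l * conj (nlosPathGain α T_A T f τ Ω 0 m g l) =
      ((‖α l‖ : ℝ) : ℂ) ^ 2 * exp (I * n * Ω l) := by
  rw [nlosPathGain_mul_conj, mul_conj, normSq_eq_norm_sq]
  simp

end Channel

theorem cacc_nlos_autocorrelation_general
    (L : ℕ) (α : ℕ → ℂ) (T_A T : ℝ)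
    (f τ Ω : ℕ → ℝ) (δτ δf : ℕ → ℝ) (x : ℕ → ℕ → ℂ)
    (hx : ∀ m g : ℕ, ‖x m g‖ = 1)
    (I : ℕ → ℕ → ℕ → ℂ)
    (hI : ∀ n m g : ℕ, I n m g =
      ∑ l ∈ Finset.Icc 1 L, α l * Complex.exp (Complex.I * n * Ω l) *
        Complex.exp (Complex.I * (2 * Real.pi * m * T_A * (f l + δf m))) *
        Complex.exp (-Complex.I * (2 * Real.pi * g / T) * (τ l + δτ m)) * x m g) :
    ∀ n m g : ℕ,
      I n m g * (starRingEnd ℂ) (I 0 m g) =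
      (∑ l ∈ Finset.Icc 1 L, (((‖α l‖ : ℝ) : ℂ)) ^ 2 *
        Complex.exp (Complex.I * n * Ω l)) +
      (∑ l ∈ Finset.Icc 1 L, ∑ x' ∈ (Finset.Icc 1 L).erase l,
        α l * (starRingEnd ℂ) (α x') * Complex.exp (Complex.I * n * Ω l) *
        Complex.exp (Complex.I * (2 * Real.pi * m * T_A * (f l - f x'))) *
        Complex.exp (-Complex.I * (2 * Real.pi * g / T) * (τ l - τ x'))) := by
  intro n m g
  have factor : ∀ n, I n m g = (∑ l ∈ Icc 1 L, nlosPathGain α T_A T f τ Ω n m g l) *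
      offsetFactor T_A T δτ δf x m g := fun n => by
    rw [hI, sum_mul]
    exact sum_congr rfl fun l _ => nlos_path_term_eq α T_A T f τ Ω δτ δf x n m g l
  rw [factor, factor, mul_mul_conj_mul_of_norm_eq_one (norm_offsetFactor T_A T (hx m g)),
    map_sum, sum_mul_sum_eq_sum_mul_add_sum_sum_erase]
  simp only [nlosPathGain_mul_conj_self, nlosPathGain_mul_conj]

/-- The NLOS auto-correlation term decomposes into a constant component
and a variant component depending only on the differences of the Doppler frequencies
and delays; in particular it is free of the offsets. -/
theorem cacc_nlos_autocorrelation
    (L : ℕ) (α : ℕ → ℂ) (T_A T : ℝ) (hT_A : 0 < T_A) (hT : 0 < T)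
    (f τ Ω : ℕ → ℝ) (δτ δf : ℕ → ℝ) (x : ℕ → ℕ → ℂ)
    (hx : ∀ m g : ℕ, ‖x m g‖ = 1)
    (D I : ℕ → ℕ → ℕ → ℂ)
    (hD : ∀ n m g : ℕ, D n m g =
      α 0 * Complex.exp (Complex.I * n * Ω 0) *
      Complex.exp (Complex.I * (2 * Real.pi * m * T_A * δf m)) *
      Complex.exp (-Complex.I * (2 * Real.pi * g / T) * (τ 0 + δτ m)) * x m g)
    (hI : ∀ n m g : ℕ, I n m g =
      ∑ l ∈ Finset.Icc 1 L, α l * Complex.exp (Complex.I * n * Ω l) *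
        Complex.exp (Complex.I * (2 * Real.pi * m * T_A * (f l + δf m))) *
        Complex.exp (-Complex.I * (2 * Real.pi * g / T) * (τ l + δτ m)) * x m g) :
    ∀ n m g : ℕ,
      I n m g * (starRingEnd ℂ) (I 0 m g) =
      (∑ l ∈ Finset.Icc 1 L, (((‖α l‖ : ℝ) : ℂ)) ^ 2 *
        Complex.exp (Complex.I * n * Ω l)) +
      (∑ l ∈ Finset.Icc 1 L, ∑ x' ∈ (Finset.Icc 1 L).erase l,
        α l * (starRingEnd ℂ) (α x') * Complex.exp (Complex.I * n * Ω l) *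
        Complex.exp (Complex.I * (2 * Real.pi * m * T_A * (f l - f x'))) *
        Complex.exp (-Complex.I * (2 * Real.pi * g / T) * (τ l - τ x'))) :=
  cacc_nlos_autocorrelation_general L α T_A T f τ Ω δτ δf x hx I hI
end

section
/- (Theorem 1, time-domain part.) Every mirrored signal vector p_n[m,g], for all n, m, g ∈ ℕ, lies in the ℂ-linear span of the L vectors {p_0(φ_1),…,p_0(φ_L)} in ℂ^{P+1}. Consequently, for any fixed n_0, g_0 ∈ ℕ and any M > P, the (P+1) × (M−P) complex matrix P whose j-th column (j = 0,…,M−P−1) is p_{n_0}[j, g_0] has rank at most L. -/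
/-- The mirrored basis vector `p_m(f) ∈ ℂ^{P+1}`, with `k`-th entry
`exp(i(m+k)f) + exp(i(m+P−k)f)`. -/
noncomputable def pvec (P m : ℕ) (f : ℝ) : Fin (P + 1) → ℂ := fun k =>
  Complex.exp (Complex.I * ((m + (k : ℕ) : ℕ) : ℂ) * (f : ℂ)) +
  Complex.exp (Complex.I * ((m + P - (k : ℕ) : ℕ) : ℂ) * (f : ℂ))

/-- The mirrored basis vector `q_g(τ) ∈ ℂ^{Q+1}`, with `k`-th entry
`exp(−i(g+k)τ) + exp(−i(g+Q−k)τ)`. -/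
noncomputable def qvec (Q g : ℕ) (τ : ℝ) : Fin (Q + 1) → ℂ := fun k =>
  Complex.exp (-Complex.I * ((g + (k : ℕ) : ℕ) : ℂ) * (τ : ℂ)) +
  Complex.exp (-Complex.I * ((g + Q - (k : ℕ) : ℕ) : ℂ) * (τ : ℂ))

/-- The noiseless CACC output `ξ_n[m,g]`. -/
noncomputable def xiSig (L : ℕ) (α : ℕ → ℂ) (φ ψ Ω : ℕ → ℝ) (n m g : ℕ) : ℂ :=
  ∑ l ∈ Finset.Icc 1 L,
    (α 0 * (starRingEnd ℂ) (α l) * Complex.exp (-Complex.I * (m : ℂ) * (φ l : ℂ)) *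
        Complex.exp (Complex.I * (g : ℂ) * (ψ l : ℂ)) *
        Complex.exp (Complex.I * (n : ℂ) * (Ω 0 : ℂ)) +
      (starRingEnd ℂ) (α 0) * α l * Complex.exp (Complex.I * (m : ℂ) * (φ l : ℂ)) *
        Complex.exp (-Complex.I * (g : ℂ) * (ψ l : ℂ)) *
        Complex.exp (Complex.I * (n : ℂ) * (Ω l : ℂ)))

/-- The mirrored (time-domain) signal vector `p_n[m,g] ∈ ℂ^{P+1}` with `k`-th entry
`ξ_n[m+k,g] + ξ_n[m+P−k,g]`. -/
noncomputable def pSig (P L : ℕ) (α : ℕ → ℂ) (φ ψ Ω : ℕ → ℝ) (n m g : ℕ) :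
    Fin (P + 1) → ℂ := fun k =>
  xiSig L α φ ψ Ω n (m + (k : ℕ)) g + xiSig L α φ ψ Ω n (m + P - (k : ℕ)) g

/-!
Both `p_m(f)` and `p_n[m,g]` arise from a sequence by the same linear mirroring
`x ↦ (x (m + k) + x (m + P - k))ₖ`, and `t ↦ ξ_n[t,g]` is a linear combination of the pure tones
`t ↦ e^{± i t φ_l}`. Mirroring a tone gives `p_m(f) = e^{imf} p_0(f)`, and the symmetry `k ↔ P - k`
gives `p_0(-f) = e^{-iPf} p_0(f)`, so each `p_n[m,g]` lies in the span of the `p_0(φ_l)`. The rank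
bound follows because the column space of the matrix is spanned by at most `L` vectors.
-/

open Complex Submodule

theorem Matrix.rank_le_card_of_col_mem_span {K m n : Type*} [Field K] [Fintype n]
    (A : Matrix m n K) (s : Finset (m → K)) (h : ∀ j, A.col j ∈ span K (s : Set (m → K))) :
    A.rank ≤ s.card := by
  rw [Matrix.rank_eq_finrank_span_cols]
  calc Module.finrank K (span K (Set.range A.col))
      ≤ Module.finrank K (span K (s : Set (m → K))) :=
        Submodule.finrank_mono (span_le.mpr (Set.range_subset_iff.mpr h))
    _ ≤ s.card := finrank_span_finset_le_card s

def mirror (R : Type*) {M : Type*} [Semiring R] [AddCommMonoid M] [Module R M] (P m : ℕ) :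
    (ℕ → M) →ₗ[R] Fin (P + 1) → M :=
  LinearMap.pi fun k : Fin (P + 1) =>
    LinearMap.proj (R := R) (φ := fun _ => M) (m + k) + LinearMap.proj (m + P - k)

noncomputable def expSeq (f : ℝ) : ℕ → ℂ := fun t => cexp (I * t * f)

theorem pvec_eq_mirror_expSeq (P m : ℕ) (f : ℝ) : pvec P m f = mirror ℂ P m (expSeq f) := rfl

theorem pSig_eq_mirror (P L : ℕ) (α : ℕ → ℂ) (φ ψ Ω : ℕ → ℝ) (n m g : ℕ) :
    pSig P L α φ ψ Ω n m g = mirror ℂ P m (fun t => xiSig L α φ ψ Ω n t g) := rfl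

theorem pvec_eq_smul_pvec_zero (P m : ℕ) (f : ℝ) :
    pvec P m f = cexp (I * m * f) • pvec P 0 f := by
  ext k
  have hk : (k : ℕ) ≤ P := k.is_le
  simp only [pvec, Pi.smul_apply, smul_eq_mul, mul_add, ← exp_add, zero_add]
  push_cast [hk, Nat.cast_sub (hk.trans (Nat.le_add_left P m))]
  ring_nf

theorem pvec_zero_neg (P : ℕ) (f : ℝ) :
    pvec P 0 (-f) = cexp (-(I * P * f)) • pvec P 0 f := by
  ext k
  have hk : (k : ℕ) ≤ P := k.is_le
  simp only [pvec, Pi.smul_apply, smul_eq_mul, mul_add, ← exp_add, zero_add]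
  push_cast [hk]
  ring_nf

theorem xiSig_eq_sum_smul_expSeq (L : ℕ) (α : ℕ → ℂ) (φ ψ Ω : ℕ → ℝ) (n g : ℕ) :
    (fun t => xiSig L α φ ψ Ω n t g) = ∑ l ∈ Finset.Icc 1 L,
      ((α 0 * starRingEnd ℂ (α l) * cexp (I * g * ψ l) * cexp (I * n * Ω 0)) • expSeq (-φ l) +
        (starRingEnd ℂ (α 0) * α l * cexp (-I * g * ψ l) * cexp (I * n * Ω l)) • expSeq (φ l)) := by
  ext t
  simp only [xiSig, expSeq, Finset.sum_apply, Pi.add_apply, Pi.smul_apply, smul_eq_mul]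
  refine Finset.sum_congr rfl fun l _ => ?_
  push_cast
  ring_nf

theorem pvec_mem_span_pvec_zero (P m : ℕ) (f : ℝ) : pvec P m f ∈ span ℂ {pvec P 0 f} :=
  mem_span_singleton.mpr ⟨_, (pvec_eq_smul_pvec_zero P m f).symm⟩

theorem pvec_neg_mem_span_pvec_zero (P m : ℕ) (f : ℝ) :
    pvec P m (-f) ∈ span ℂ {pvec P 0 f} :=
  mem_span_singleton.mpr
    ⟨_, by rw [pvec_eq_smul_pvec_zero P m, pvec_zero_neg, smul_smul]⟩

theorem pSig_mem_span (P L : ℕ) (α : ℕ → ℂ) (φ ψ Ω : ℕ → ℝ) (n m g : ℕ) :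
    pSig P L α φ ψ Ω n m g ∈
      span ℂ ((fun l : ℕ => pvec P 0 (φ l)) '' ↑(Finset.Icc 1 L)) := by
  rw [pSig_eq_mirror, xiSig_eq_sum_smul_expSeq, map_sum]
  refine sum_mem fun l hl => ?_
  have hspan : span ℂ {pvec P 0 (φ l)} ≤
      span ℂ ((fun l : ℕ => pvec P 0 (φ l)) '' ↑(Finset.Icc 1 L)) :=
    span_mono (Set.singleton_subset_iff.mpr ⟨l, hl, rfl⟩)
  rw [map_add, map_smul, map_smul, ← pvec_eq_mirror_expSeq, ← pvec_eq_mirror_expSeq]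
  exact add_mem (smul_mem _ _ (hspan (pvec_neg_mem_span_pvec_zero P m _)))
    (smul_mem _ _ (hspan (pvec_mem_span_pvec_zero P m _)))

/-- Theorem 1, time-domain part: every mirrored signal vector
`p_n[m,g]` lies in the span of the `L` vectors `{p_0(φ_1),…,p_0(φ_L)}`; consequently
the `(P+1) × (M−P)` matrix whose `j`-th column is `p_{n_0}[j,g_0]` has rank at most `L`. -/
theorem pSig_span_and_rank (P L : ℕ) (α : ℕ → ℂ) (φ ψ Ω : ℕ → ℝ) :
    (∀ n m g : ℕ, pSig P L α φ ψ Ω n m g ∈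
      Submodule.span ℂ ((fun l : ℕ => pvec P 0 (φ l)) '' ↑(Finset.Icc 1 L))) ∧
    (∀ n₀ g₀ M : ℕ, P < M →
      Matrix.rank (Matrix.of fun (k : Fin (P + 1)) (j : Fin (M - P)) =>
        pSig P L α φ ψ Ω n₀ (j : ℕ) g₀ k) ≤ L) := by
  refine ⟨pSig_mem_span P L α φ ψ Ω, fun n₀ g₀ M _ => ?_⟩
  calc _ ≤ ((Finset.Icc 1 L).image fun l => pvec P 0 (φ l)).card := by
        refine Matrix.rank_le_card_of_col_mem_span _ _ fun j => ?_
        rw [Finset.coe_image]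
        exact pSig_mem_span P L α φ ψ Ω n₀ j g₀
    _ ≤ L := Finset.card_image_le.trans (by simp)
end

section
/- (Linear independence of the mirrored basis, making precise the claim that the ranges of P guarantee L linearly independent mirrored basis vectors.) Suppose P = 2R is even and f_1,…,f_L ∈ (0, π) are pairwise distinct with L ≤ R + 1. Then the mirrored basis vectors p_0(f_1),…,p_0(f_L) are linearly independent over ℂ in ℂ^{P+1}; in particular, the ℂ-linear span of the family {p_m(ε f_l) : m ∈ ℕ, ε ∈ {+1,−1}, l ∈ {1,…,L}} has dimension exactly L. -/
/-!
With `P = 2R`, the mirror symmetry `k ↔ 2R - k` gives `p_m(f) = 2 e^{i(m+R)f} c(f)` where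
`c(f)_k = cos((k - R) f)` depends neither on `m` nor on the sign of `f`; so the whole family spans
the span of the `c(f_l)`, and everything reduces to their linear independence. The entries
`k = R + j` of `c(f)` are `cos(j f) = T_j(cos f)`. The Chebyshev polynomials `T_0, …, T_R` span
all polynomials of degree `≤ R`, so a relation `∑ g_l c(f_l) = 0` yields `∑ g_l q(cos f_l) = 0`
for every such `q`. The nodes `cos f_l` are distinct (`cos` is injective on `[0, π]`) and
there are at most `R + 1` of them, so the Lagrange basis polynomials isolate each `g_l`.
-/

open Polynomial Submodule

theorem Polynomial.linearIndependent_eval_of_degreeLE_le_span {K ι κ : Type*} [Field K]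
    [Fintype ι] {x : ι → K} (hx : Function.Injective x) {n : ℕ}
    (hn : Fintype.card ι ≤ n + 1) (q : κ → K[X])
    (hq : degreeLE K n ≤ span K (Set.range q)) :
    LinearIndependent K (fun l j => (q j).eval (x l)) := by
  classical
  rw [Fintype.linearIndependent_iff]
  intro g hg l₀
  let φ : K[X] →ₗ[K] K := ∑ l, g l • leval (x l)
  have hφ : degreeLE K n ≤ LinearMap.ker φ := by
    refine hq.trans (span_le.mpr ?_)
    rintro _ ⟨j, rfl⟩
    simpa [φ] using congrFun hg j
  have hbasis : Lagrange.basis Finset.univ x l₀ ∈ degreeLE K n := by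
    rw [mem_degreeLE]
    refine degree_le_of_natDegree_le ?_
    rw [Lagrange.natDegree_basis hx.injOn (Finset.mem_univ _), Finset.card_univ]
    omega
  have hφ_basis : φ (Lagrange.basis Finset.univ x l₀) = g l₀ := by
    simp only [φ, LinearMap.sum_apply, LinearMap.smul_apply, leval_apply, smul_eq_mul]
    rw [Finset.sum_eq_single l₀ (fun l _ hl => by
        rw [Lagrange.eval_basis_of_ne hl.symm (Finset.mem_univ _), mul_zero]) (by simp),
      Lagrange.eval_basis_self hx.injOn (Finset.mem_univ _), mul_one]
  rw [← hφ_basis]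
  exact hφ hbasis

theorem Polynomial.Chebyshev.degreeLE_le_span_T {K : Type*} [Field K] [NeZero (2 : K)] (n : ℕ) :
    degreeLE K n ≤ span K (Set.range fun j : Fin (n + 1) => Chebyshev.T K j) := by
  let S : Sequence K := ⟨fun i => Chebyshev.T K i, fun i => by simp [Chebyshev.degree_T]⟩
  rw [← S.span_degreeLE fun i _ => (leadingCoeff_ne_zero.mpr (S.ne_zero i)).isUnit]
  refine span_mono ?_
  rintro _ ⟨i, hi, rfl⟩
  exact ⟨⟨i, Nat.lt_succ_of_le hi⟩, rfl⟩

noncomputable def cosVec (R : ℕ) (f : ℝ) : Fin (2 * R + 1) → ℂ :=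
  fun k => Complex.cos (((k : ℕ) - R : ℂ) * f)

theorem cosVec_neg (R : ℕ) (f : ℝ) : cosVec R (-f) = cosVec R f := by
  ext k
  simp only [cosVec, Complex.ofReal_neg, mul_neg, Complex.cos_neg]

theorem pvec_eq_smul_cosVec (R m : ℕ) (f : ℝ) :
    pvec (2 * R) m f = (2 * Complex.exp (Complex.I * (m + R) * f)) • cosVec R f := by
  ext k
  have hk : (k : ℕ) ≤ m + 2 * R := by omega
  simp only [pvec, cosVec, Pi.smul_apply, smul_eq_mul]
  rw [mul_right_comm (2 : ℂ), Complex.two_cos, add_mul, ← Complex.exp_add, ← Complex.exp_add]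
  push_cast [Nat.cast_sub hk]
  ring_nf

theorem linearIndependent_cosVec {ι : Type*} [Fintype ι] (R : ℕ) {f : ι → ℝ}
    (hf : ∀ l, f l ∈ Set.Icc 0 Real.pi) (hinj : Function.Injective f)
    (hcard : Fintype.card ι ≤ R + 1) :
    LinearIndependent ℂ (fun l => cosVec R (f l)) := by
  have hcos : Function.Injective fun l => Complex.cos (f l) := fun a b hab =>
    hinj <| Real.injOn_cos (hf a) (hf b) <| by
      simpa only [← Complex.ofReal_cos, Complex.ofReal_inj] using hab
  let upperHalf : (Fin (2 * R + 1) → ℂ) →ₗ[ℂ] (Fin (R + 1) → ℂ) :=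
    LinearMap.funLeft ℂ ℂ fun j => ⟨R + j, by omega⟩
  have hchebyshev : upperHalf ∘ (fun l => cosVec R (f l)) =
      fun l (j : Fin (R + 1)) => (Chebyshev.T ℂ (j : ℕ)).eval (Complex.cos (f l)) := by
    ext l j
    simp [upperHalf, cosVec, Chebyshev.T_complex_cos]
  refine LinearIndependent.of_comp upperHalf ?_
  rw [hchebyshev]
  exact Polynomial.linearIndependent_eval_of_degreeLE_le_span hcos hcard _
    (Chebyshev.degreeLE_le_span_T R)

theorem span_pvec_eq_span_cosVec {ι : Type*} (R : ℕ) (f : ι → ℝ) :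
    span ℂ {v : Fin (2 * R + 1) → ℂ | ∃ (m : ℕ) (ε : ℝ) (l : ι),
        (ε = 1 ∨ ε = -1) ∧ v = pvec (2 * R) m (ε * f l)} =
      span ℂ (Set.range fun l => cosVec R (f l)) := by
  refine span_eq_span ?_ ?_
  · rintro _ ⟨m, ε, l, hε, rfl⟩
    have hcos : cosVec R (ε * f l) = cosVec R (f l) := by
      rcases hε with rfl | rfl
      · rw [one_mul]
      · rw [neg_one_mul, cosVec_neg]
    rw [pvec_eq_smul_cosVec, hcos]
    exact smul_mem _ _ (subset_span ⟨l, rfl⟩)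
  · rintro _ ⟨l, rfl⟩
    show cosVec R (f l) ∈ _
    have hscale : (2 * Complex.exp (Complex.I * ((0 : ℕ) + R) * f l)) ≠ 0 := by
      simp [Complex.exp_ne_zero]
    rw [← inv_smul_smul₀ hscale (cosVec R (f l)), ← pvec_eq_smul_cosVec]
    exact smul_mem _ _ (subset_span ⟨0, 1, l, Or.inl rfl, by rw [one_mul]⟩)

/-- with `P = 2R` even and pairwise distinct `f_l ∈ (0, π)`, `L ≤ R+1`,
the mirrored basis vectors `p_0(f_1),…,p_0(f_L)` are linearly independent, and the span
of the whole mirrored family has dimension exactly `L`. -/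
theorem pvec_linear_independent (R L : ℕ) (f : Fin L → ℝ)
    (hf : ∀ l : Fin L, f l ∈ Set.Ioo 0 Real.pi)
    (hinj : Function.Injective f) (hL : L ≤ R + 1) :
    LinearIndependent ℂ (fun l : Fin L => pvec (2 * R) 0 (f l)) ∧
    Module.finrank ℂ (Submodule.span ℂ
      {v : Fin (2 * R + 1) → ℂ | ∃ (m : ℕ) (ε : ℝ) (l : Fin L),
        (ε = 1 ∨ ε = -1) ∧ v = pvec (2 * R) m (ε * f l)}) = L := by
  have hcos : LinearIndependent ℂ fun l => cosVec R (f l) :=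
    linearIndependent_cosVec R (fun l => Set.Ioo_subset_Icc_self (hf l)) hinj
      (by rwa [Fintype.card_fin])
  refine ⟨?_, ?_⟩
  · let w : Fin L → ℂˣ := fun l => Units.mk0 _ (mul_ne_zero two_ne_zero
      (Complex.exp_ne_zero (Complex.I * ((0 : ℕ) + R) * f l)))
    convert hcos.units_smul w using 1
    ext l : 1
    exact pvec_eq_smul_cosVec R 0 (f l)
  · rw [span_pvec_eq_span_cosVec, finrank_span_eq_card hcos, Fintype.card_fin]
end

section
/- (Linear independence of the mirrored basis, making precise the claim that the ranges of Q guarantee L linearly independent mirrored basis vectors.) Suppose Q = 2R is even and τ_1,…,τ_L ∈ (0, π) are pairwise distinct with L ≤ R + 1. Then the mirrored basis vectors q_0(τ_1),…,q_0(τ_L) are linearly independent over ℂ in ℂ^{Q+1}; in particular, the ℂ-linear span of the family {q_g(ε τ_l) : g ∈ ℕ, ε ∈ {+1,−1}, l ∈ {1,…,L}} has dimension exactly L. -/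
/-!
The entry of `q_0(τ) ∈ ℂ^{2R+1}` at index `R - m` is `2 e^{-iRτ} cos(mτ) = 2 e^{-iRτ} T_m(cos τ)`,
with `T_m` the Chebyshev polynomial. Since `T_0, …, T_R` span the polynomials of degree `≤ R`,
a relation `∑ c_l q_0(τ_l) = 0` annihilates every such polynomial evaluated at the distinct
points `cos τ_l` (weighted by `c_l e^{-iRτ_l}`); the Lagrange basis polynomials then force
`c = 0`. Every `q_g(±τ)` is a unit multiple of `q_0(τ)`, so the whole family spans the same space.
-/

open Polynomial

theorem linearIndependent_sequence_eval {F ι : Type*} [Field F] [Fintype ι]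
    (S : Polynomial.Sequence F) {R : ℕ} (hcard : Fintype.card ι ≤ R + 1) {x : ι → F}
    (hx : Function.Injective x) :
    LinearIndependent F (fun l (m : Fin (R + 1)) => (S m).eval (x l)) := by
  classical
  rw [Fintype.linearIndependent_iff]
  intro a ha l₀
  let φ : F[X] →ₗ[F] F := ∑ l, a l • leval (x l)
  have hφ : ∀ p, φ p = ∑ l, a l * p.eval (x l) := fun p => by simp [φ]
  have hker : degreeLE F R ≤ LinearMap.ker φ := by
    rw [← S.span_degreeLE fun i _ => (leadingCoeff_ne_zero.mpr (S.ne_zero i)).isUnit,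
      Submodule.span_le]
    rintro _ ⟨m, hm, rfl⟩
    simpa [hφ] using congrFun ha ⟨m, Nat.lt_succ_of_le hm⟩
  have hbasis : Lagrange.basis Finset.univ x l₀ ∈ degreeLE F R := by
    rw [mem_degreeLE, Lagrange.degree_basis hx.injOn (Finset.mem_univ _), Finset.card_univ]
    exact_mod_cast Nat.sub_le_of_le_add hcard
  have := hker hbasis
  rwa [LinearMap.mem_ker, hφ, Finset.sum_eq_single l₀ (fun l _ hl => by
      rw [Lagrange.eval_basis_of_ne hl.symm (Finset.mem_univ _), mul_zero]) (by simp),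
    Lagrange.eval_basis_self hx.injOn (Finset.mem_univ _), mul_one] at this

noncomputable def chebyshevT (F : Type*) [CommRing F] [IsDomain F] [NeZero (2 : F)] :
    Polynomial.Sequence F where
  elems' n := Chebyshev.T F n
  degree_eq' n := by simp

open Complex

theorem chebyshevT_eval_cos (θ : ℂ) (m : ℕ) : (chebyshevT ℂ m).eval (cos θ) = cos (m * θ) := by
  exact_mod_cast Chebyshev.T_complex_cos θ m

theorem qvec_zero_apply_sub (R m : ℕ) (hm : m ≤ R) (τ : ℝ) :
    qvec (2 * R) 0 τ ⟨R - m, by omega⟩ = 2 * exp (-I * R * τ) * cos (m * τ) := by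
  have h₁ : ((0 + (R - m) : ℕ) : ℂ) = R - m := by push_cast [hm]; ring
  have h₂ : ((0 + 2 * R - (R - m) : ℕ) : ℂ) = R + m := by
    rw [show 0 + 2 * R - (R - m) = R + m by omega]; push_cast; ring
  simp only [qvec, h₁, h₂, cos]
  field_simp
  simp only [mul_add, ← exp_add]
  congr 2 <;> ring

theorem qvec_eq_smul_qvec_zero (Q g : ℕ) (τ : ℝ) :
    qvec Q g τ = exp (-I * g * τ) • qvec Q 0 τ := by
  ext k
  have hk : (k : ℕ) ≤ Q := Nat.lt_succ_iff.mp k.isLt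
  simp only [qvec, Pi.smul_apply, smul_eq_mul, mul_add, ← exp_add]
  congr 2 <;> push_cast [Nat.add_sub_assoc hk, Nat.cast_sub hk] <;> ring

theorem qvec_zero_neg (Q : ℕ) (τ : ℝ) :
    qvec Q 0 (-τ) = exp (I * Q * τ) • qvec Q 0 τ := by
  ext k
  have hk : (k : ℕ) ≤ Q := Nat.lt_succ_iff.mp k.isLt
  simp only [qvec, zero_add, Pi.smul_apply, smul_eq_mul, mul_add, ← exp_add]
  rw [add_comm]
  congr 2 <;> push_cast [Nat.cast_sub hk] <;> ring

theorem linearIndependent_cos_nat_mul {ι : Type*} [Fintype ι] {R : ℕ}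
    (hcard : Fintype.card ι ≤ R + 1) {θ : ι → ℂ} (hθ : Function.Injective fun l => cos (θ l)) :
    LinearIndependent ℂ (fun l (m : Fin (R + 1)) => cos (m * θ l)) := by
  simpa [chebyshevT_eval_cos] using linearIndependent_sequence_eval (chebyshevT ℂ) hcard hθ

theorem linearIndependent_qvec_zero {ι : Type*} [Fintype ι] (R : ℕ) (τ : ι → ℝ)
    (hτ : ∀ l, τ l ∈ Set.Icc 0 Real.pi) (hinj : Function.Injective τ)
    (hcard : Fintype.card ι ≤ R + 1) :
    LinearIndependent ℂ (fun l => qvec (2 * R) 0 (τ l)) := by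
  have hcos : Function.Injective fun l => cos (τ l : ℂ) := fun l l' h =>
    hinj <| Real.injOn_cos (hτ l) (hτ l') <| ofReal_injective <| by
      simpa only [ofReal_cos] using h
  have hscaled := (linearIndependent_cos_nat_mul hcard hcos).units_smul
    fun l => Units.mk0 (2 * exp (-I * R * τ l)) (by simp [exp_ne_zero])
  refine LinearIndependent.of_comp
    (LinearMap.funLeft ℂ ℂ fun m : Fin (R + 1) => (⟨R - m, by omega⟩ : Fin (2 * R + 1))) ?_
  convert hscaled using 1
  ext l m
  exact qvec_zero_apply_sub R m (by omega) (τ l)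

theorem span_qvec_pm_eq_span_qvec_zero {ι : Type*} (Q : ℕ) (τ : ι → ℝ) :
    Submodule.span ℂ {v : Fin (Q + 1) → ℂ | ∃ (g : ℕ) (ε : ℝ) (l : ι),
      (ε = 1 ∨ ε = -1) ∧ v = qvec Q g (ε * τ l)}
      = Submodule.span ℂ (Set.range fun l => qvec Q 0 (τ l)) := by
  apply le_antisymm <;> rw [Submodule.span_le]
  · rintro _ ⟨g, ε, l, hε | hε, rfl⟩ <;> subst hε
    · rw [one_mul, qvec_eq_smul_qvec_zero]
      exact Submodule.smul_mem _ _ (Submodule.subset_span ⟨l, rfl⟩)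
    · rw [neg_one_mul, qvec_eq_smul_qvec_zero, qvec_zero_neg, smul_smul]
      exact Submodule.smul_mem _ _ (Submodule.subset_span ⟨l, rfl⟩)
  · rintro _ ⟨l, rfl⟩
    exact Submodule.subset_span ⟨0, 1, l, Or.inl rfl, by rw [one_mul]⟩

/-- with `Q = 2R` even and pairwise distinct `τ_l ∈ (0, π)`, `L ≤ R+1`,
the mirrored basis vectors `q_0(τ_1),…,q_0(τ_L)` are linearly independent, and the span
of the whole mirrored family has dimension exactly `L`. -/
theorem qvec_linear_independent (R L : ℕ) (τ : Fin L → ℝ)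
    (hτ : ∀ l : Fin L, τ l ∈ Set.Ioo 0 Real.pi)
    (hinj : Function.Injective τ) (hL : L ≤ R + 1) :
    LinearIndependent ℂ (fun l : Fin L => qvec (2 * R) 0 (τ l)) ∧
    Module.finrank ℂ (Submodule.span ℂ
      {v : Fin (2 * R + 1) → ℂ | ∃ (g : ℕ) (ε : ℝ) (l : Fin L),
        (ε = 1 ∨ ε = -1) ∧ v = qvec (2 * R) g (ε * τ l)}) = L := by
  have hindep : LinearIndependent ℂ (fun l : Fin L => qvec (2 * R) 0 (τ l)) :=
    linearIndependent_qvec_zero R τ (fun l => Set.Ioo_subset_Icc_self (hτ l)) hinj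
      (by rwa [Fintype.card_fin])
  refine ⟨hindep, ?_⟩
  rw [span_qvec_pm_eq_span_qvec_zero, finrank_span_eq_card hindep, Fintype.card_fin]
end

section
/- (Rank bound for the combined spatial–temporal–frequency matrix C.) Fix C ∈ ℕ with C ≥ 1. Define the stacked vectors c₁[m,g] ∈ ℂ^{C(N−1)} as the concatenation of the blocks c[m,g], c[m,g+1], …, c[m,g+C−1], and c₂[m,g] ∈ ℂ^{C(N−1)} as the concatenation of the blocks c[m,g], c[m+1,g], …, c[m+C−1,g]. For each l' ∈ {−L,…,−1,1,…,L} define c¹_{l'} ∈ ℂ^{C(N−1)} as the concatenation of the blocks a(Ω_{l'})·exp(−i c τ̄_{l'}) for c = 0,…,C−1, and c²_{l'} ∈ ℂ^{C(N−1)} as the concatenation of the blocks a(Ω_{l'})·exp(i c f̄_{l'}) for c = 0,…,C−1. Then for every m, g ∈ ℕ, both c₁[m,g] and c₂[m,g] lie in the ℂ-linear span of the 4L vectors {c¹_{l'}, c²_{l'} : l' = ±1,…,±L}; consequently, for any C₁ ∈ ℕ, the C(N−1) × 2(C₁+1) matrix whose columns are c₁[m,m] and c₂[m,m] for m = 0,…,C₁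 has rank at most 4L. -/
/-!
Shifting the delay index `g` by `c` multiplies the weight `ψ_{l'}[m,g]` by `exp(−i c τ̄_{l'})`,
and shifting the Doppler index `m` by `c` multiplies it by `exp(i c f̄_{l'})`. Hence
`c₁[m,g] = Σ_{l'} ψ_{l'}[m,g] c¹_{l'}` and `c₂[m,g] = Σ_{l'} ψ_{l'}[m,g] c²_{l'}`, so every column
of the matrix lies in the span of the `4L` vectors `c¹_{l'}, c²_{l'}`.
-/

/-- The index set `{−L,…,−1,1,…,L}`. -/
noncomputable def idxSet (L : ℕ) : Finset ℤ := (Finset.Icc (-(L : ℤ)) (L : ℤ)).erase 0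

/-- The signal `ξ_n[m,g] = Σ_{l'=−L, l'≠0}^{L} P_{l'}·exp(i m f̄_{l'})·exp(−i g τ̄_{l'})·exp(i n Ω_{l'})`. -/
noncomputable def xiZ (L : ℕ) (Pc : ℤ → ℂ) (fb τb Ω : ℤ → ℝ) (n m g : ℕ) : ℂ :=
  ∑ l ∈ idxSet L,
    Pc l * Complex.exp (Complex.I * (m : ℂ) * (fb l : ℂ)) *
      Complex.exp (-Complex.I * (g : ℂ) * (τb l : ℂ)) *
      Complex.exp (Complex.I * (n : ℂ) * (Ω l : ℂ))

/-- The array response vector `a(Ω) ∈ ℂ^{N−1}` with `n`-th entry `exp(i n Ω)`, `n = 1,…,N−1`. -/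
noncomputable def aVec (N : ℕ) (Ω : ℝ) : Fin (N - 1) → ℂ := fun j =>
  Complex.exp (Complex.I * (((j : ℕ) + 1 : ℕ) : ℂ) * (Ω : ℂ))

/-- The spatial signal vector `c[m,g] ∈ ℂ^{N−1}` with `n`-th entry `ξ_n[m,g]`, `n = 1,…,N−1`. -/
noncomputable def cVec (N L : ℕ) (Pc : ℤ → ℂ) (fb τb Ω : ℤ → ℝ) (m g : ℕ) :
    Fin (N - 1) → ℂ := fun j => xiZ L Pc fb τb Ω ((j : ℕ) + 1) m g

/-- The weighting factor `ψ_{l'}[m,g] = P_{l'}·exp(i m f̄_{l'})·exp(−i g τ̄_{l'})`. -/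
noncomputable def ψw (Pc : ℤ → ℂ) (fb τb : ℤ → ℝ) (l : ℤ) (m g : ℕ) : ℂ :=
  Pc l * Complex.exp (Complex.I * (m : ℂ) * (fb l : ℂ)) *
    Complex.exp (-Complex.I * (g : ℂ) * (τb l : ℂ))

/-- The stacked (delay-domain) vector `c₁[m,g] ∈ ℂ^{C(N−1)}`, the concatenation of the
blocks `c[m,g], c[m,g+1], …, c[m,g+C−1]` (block index `p.1`, in-block index `p.2`). -/
noncomputable def c1Vec (N L C : ℕ) (Pc : ℤ → ℂ) (fb τb Ω : ℤ → ℝ) (m g : ℕ) :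
    Fin C × Fin (N - 1) → ℂ := fun p => cVec N L Pc fb τb Ω m (g + (p.1 : ℕ)) p.2

/-- The stacked (Doppler-domain) vector `c₂[m,g] ∈ ℂ^{C(N−1)}`, the concatenation of
the blocks `c[m,g], c[m+1,g], …, c[m+C−1,g]`. -/
noncomputable def c2Vec (N L C : ℕ) (Pc : ℤ → ℂ) (fb τb Ω : ℤ → ℝ) (m g : ℕ) :
    Fin C × Fin (N - 1) → ℂ := fun p => cVec N L Pc fb τb Ω (m + (p.1 : ℕ)) g p.2

/-- The stacked (delay-domain) basis vector `c¹_{l'} ∈ ℂ^{C(N−1)}`, the concatenation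
of the blocks `a(Ω_{l'})·exp(−i c τ̄_{l'})` for `c = 0,…,C−1`. -/
noncomputable def c1Basis (N C : ℕ) (τbl Ωl : ℝ) : Fin C × Fin (N - 1) → ℂ :=
  fun p => aVec N Ωl p.2 * Complex.exp (-Complex.I * ((p.1 : ℕ) : ℂ) * (τbl : ℂ))

/-- The stacked (Doppler-domain) basis vector `c²_{l'} ∈ ℂ^{C(N−1)}`, the concatenation
of the blocks `a(Ω_{l'})·exp(i c f̄_{l'})` for `c = 0,…,C−1`. -/
noncomputable def c2Basis (N C : ℕ) (fbl Ωl : ℝ) : Fin C × Fin (N - 1) → ℂ :=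
  fun p => aVec N Ωl p.2 * Complex.exp (Complex.I * ((p.1 : ℕ) : ℂ) * (fbl : ℂ))

theorem card_idxSet (L : ℕ) : (idxSet L).card = 2 * L := by
  rw [idxSet, Finset.card_erase_of_mem (by simp), Int.card_Icc]
  omega

theorem Matrix.rank_le_card_of_col_mem_span_s19 {R m n : Type*} [CommRing R] [StrongRankCondition R]
    [Fintype n] (A : Matrix m n R) (T : Finset (m → R))
    (h : ∀ j, (fun i => A i j) ∈ Submodule.span R (T : Set (m → R))) :
    A.rank ≤ T.card := by
  rw [A.rank_eq_finrank_span_cols]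
  refine (Submodule.finrank_mono ?_).trans (finrank_span_finset_le_card T)
  rw [Submodule.span_le]
  rintro _ ⟨j, rfl⟩
  exact h j

section Signal

variable {N L C : ℕ} {Pc : ℤ → ℂ} {fb τb Ω : ℤ → ℝ}

theorem cVec_eq_sum (m g : ℕ) :
    cVec N L Pc fb τb Ω m g = ∑ l ∈ idxSet L, ψw Pc fb τb l m g • aVec N (Ω l) := by
  funext j
  simp only [cVec, xiZ, aVec, ψw, Finset.sum_apply, Pi.smul_apply, smul_eq_mul]

theorem ψw_add_delay (l : ℤ) (m g k : ℕ) :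
    ψw Pc fb τb l m (g + k) =
      ψw Pc fb τb l m g * Complex.exp (-Complex.I * (k : ℂ) * (τb l : ℂ)) := by
  simp only [ψw, Nat.cast_add, mul_add, add_mul, Complex.exp_add]
  ring

theorem ψw_add_doppler (l : ℤ) (m g k : ℕ) :
    ψw Pc fb τb l (m + k) g =
      ψw Pc fb τb l m g * Complex.exp (Complex.I * (k : ℂ) * (fb l : ℂ)) := by
  simp only [ψw, Nat.cast_add, mul_add, add_mul, Complex.exp_add]
  ring

theorem c1Vec_eq_sum (m g : ℕ) :
    c1Vec N L C Pc fb τb Ω m g =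
      ∑ l ∈ idxSet L, ψw Pc fb τb l m g • c1Basis N C (τb l) (Ω l) := by
  funext p
  simp only [c1Vec, cVec_eq_sum, c1Basis, ψw_add_delay, Finset.sum_apply, Pi.smul_apply,
    smul_eq_mul]
  exact Finset.sum_congr rfl fun l _ => by ring

theorem c2Vec_eq_sum (m g : ℕ) :
    c2Vec N L C Pc fb τb Ω m g =
      ∑ l ∈ idxSet L, ψw Pc fb τb l m g • c2Basis N C (fb l) (Ω l) := by
  funext p
  simp only [c2Vec, cVec_eq_sum, c2Basis, ψw_add_doppler, Finset.sum_apply, Pi.smul_apply,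
    smul_eq_mul]
  exact Finset.sum_congr rfl fun l _ => by ring

theorem c1Vec_mem_span (m g : ℕ) :
    c1Vec N L C Pc fb τb Ω m g ∈
      Submodule.span ℂ ((fun l : ℤ => c1Basis N C (τb l) (Ω l)) '' ↑(idxSet L)) := by
  rw [c1Vec_eq_sum]
  exact Submodule.sum_smul_mem _ _ fun l hl => Submodule.subset_span ⟨l, hl, rfl⟩

theorem c2Vec_mem_span (m g : ℕ) :
    c2Vec N L C Pc fb τb Ω m g ∈
      Submodule.span ℂ ((fun l : ℤ => c2Basis N C (fb l) (Ω l)) '' ↑(idxSet L)) := by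
  rw [c2Vec_eq_sum]
  exact Submodule.sum_smul_mem _ _ fun l hl => Submodule.subset_span ⟨l, hl, rfl⟩

end Signal

theorem combined_matrix_rank_le_general (N L C : ℕ)
    (Pc : ℤ → ℂ) (fb τb Ω : ℤ → ℝ) :
    (∀ m g : ℕ,
      c1Vec N L C Pc fb τb Ω m g ∈
        Submodule.span ℂ
          (((fun l : ℤ => c1Basis N C (τb l) (Ω l)) '' ↑(idxSet L)) ∪
            ((fun l : ℤ => c2Basis N C (fb l) (Ω l)) '' ↑(idxSet L))) ∧
      c2Vec N L C Pc fb τb Ω m g ∈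
        Submodule.span ℂ
          (((fun l : ℤ => c1Basis N C (τb l) (Ω l)) '' ↑(idxSet L)) ∪
            ((fun l : ℤ => c2Basis N C (fb l) (Ω l)) '' ↑(idxSet L)))) ∧
    (∀ C₁ : ℕ,
      Matrix.rank (Matrix.of fun (p : Fin C × Fin (N - 1)) (j : Fin (C₁ + 1) × Fin 2) =>
        if j.2 = 0 then c1Vec N L C Pc fb τb Ω (j.1 : ℕ) (j.1 : ℕ) p
        else c2Vec N L C Pc fb τb Ω (j.1 : ℕ) (j.1 : ℕ) p) ≤ 4 * L) := by
  set S : Set (Fin C × Fin (N - 1) → ℂ) :=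
    ((fun l : ℤ => c1Basis N C (τb l) (Ω l)) '' ↑(idxSet L)) ∪
      ((fun l : ℤ => c2Basis N C (fb l) (Ω l)) '' ↑(idxSet L))
  have hmem : ∀ m g : ℕ, c1Vec N L C Pc fb τb Ω m g ∈ Submodule.span ℂ S ∧
      c2Vec N L C Pc fb τb Ω m g ∈ Submodule.span ℂ S := fun m g =>
    ⟨Submodule.span_mono Set.subset_union_left (c1Vec_mem_span m g),
      Submodule.span_mono Set.subset_union_right (c2Vec_mem_span m g)⟩
  refine ⟨hmem, fun C₁ => ?_⟩
  classical
  set T := (idxSet L).image (fun l => c1Basis N C (τb l) (Ω l)) ∪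
    (idxSet L).image (fun l => c2Basis N C (fb l) (Ω l))
  have hTS : (T : Set (Fin C × Fin (N - 1) → ℂ)) = S := by
    simp only [T, S, Finset.coe_union, Finset.coe_image]
  calc _ ≤ T.card := Matrix.rank_le_card_of_col_mem_span_s19 _ T fun j => by
        rw [hTS]
        by_cases h : j.2 = 0
        · simpa only [Matrix.of_apply, h, if_true]
            using (hmem j.1 j.1).1
        · simpa only [Matrix.of_apply, h, if_false]
            using (hmem j.1 j.1).2
    _ ≤ (idxSet L).card + (idxSet L).card :=
        (Finset.card_union_le _ _).trans (add_le_add Finset.card_image_le Finset.card_image_le)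
    _ = 4 * L := by rw [card_idxSet]; ring

/-- rank bound for the combined spatial–temporal–frequency matrix `C`:
both `c₁[m,g]` and `c₂[m,g]` lie in the span of the `4L` vectors
`{c¹_{l'}, c²_{l'} : l' = ±1,…,±L}`; consequently the `C(N−1) × 2(C₁+1)` matrix whose
columns are `c₁[m,m]` and `c₂[m,m]` for `m = 0,…,C₁` has rank at most `4L`. -/
theorem combined_matrix_rank_le (N L C : ℕ) (hN : 2 ≤ N) (hC : 1 ≤ C)
    (Pc : ℤ → ℂ) (fb τb Ω : ℤ → ℝ) :
    (∀ m g : ℕ,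
      c1Vec N L C Pc fb τb Ω m g ∈
        Submodule.span ℂ
          (((fun l : ℤ => c1Basis N C (τb l) (Ω l)) '' ↑(idxSet L)) ∪
            ((fun l : ℤ => c2Basis N C (fb l) (Ω l)) '' ↑(idxSet L))) ∧
      c2Vec N L C Pc fb τb Ω m g ∈
        Submodule.span ℂ
          (((fun l : ℤ => c1Basis N C (τb l) (Ω l)) '' ↑(idxSet L)) ∪
            ((fun l : ℤ => c2Basis N C (fb l) (Ω l)) '' ↑(idxSet L)))) ∧
    (∀ C₁ : ℕ,
      Matrix.rank (Matrix.of fun (p : Fin C × Fin (N - 1)) (j : Fin (C₁ + 1) × Fin 2) =>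
        if j.2 = 0 then c1Vec N L C Pc fb τb Ω (j.1 : ℕ) (j.1 : ℕ) p
        else c2Vec N L C Pc fb τb Ω (j.1 : ℕ) (j.1 : ℕ) p) ≤ 4 * L) :=
  combined_matrix_rank_le_general N L C Pc fb τb Ω
end
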